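/- arXiv:2204.01083 — 5 statements merged into one kernel-verified Lean document; each statement's English description precedes it below -/
import Mathlib

section
/- Let a, b ∈ [0,1] and let (P_kk, P_kl, P_lk, P_ll) be a consistent probability quadruple for (a, b). Then there exists a single r ∈ [0,1], the same for both phases, such that P_kk = r·max(a + b − 1, 0) + (1 − r)·min(a, b), P_kl = r·min(a, 1 − b) + (1 − r)·max(a − b, 0), P_lk = r·min(1 − a, b) + (1 − r)·max(b − a, 0), and P_ll = r·max(1 − a − b, 0) + (1 − r)·min(1 − a, 1 − b). In other words, every consistent probability quadruple is a convex combination, with a phase-independent coefficient r, of the dispersed-flow quadruple P¹ and the stratified-flow quadruple P⁰. -/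
/-- Local convexity: every consistent probability quadruple is a convex combination,
with a phase-independent coefficient `r ∈ [0,1]`, of the dispersed-flow quadruple `P¹`
and the stratified-flow quadruple `P⁰`. -/
theorem stmt_5 (a b Pkk Pkl Plk Pll : ℝ)
    (ha0 : 0 ≤ a) (ha1 : a ≤ 1) (hb0 : 0 ≤ b) (hb1 : b ≤ 1)
    (hPkk : 0 ≤ Pkk) (hPkl : 0 ≤ Pkl) (hPlk : 0 ≤ Plk) (hPll : 0 ≤ Pll)
    (h1 : Pkk + Pkl = a) (h2 : Pll + Plk = 1 - a)
    (h3 : Pkk + Plk = b) (h4 : Pll + Pkl = 1 - b) :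
    ∃ r : ℝ, 0 ≤ r ∧ r ≤ 1 ∧
      Pkk = r * max (a + b - 1) 0 + (1 - r) * min a b ∧
      Pkl = r * min a (1 - b) + (1 - r) * max (a - b) 0 ∧
      Plk = r * min (1 - a) b + (1 - r) * max (b - a) 0 ∧
      Pll = r * max (1 - a - b) 0 + (1 - r) * min (1 - a) (1 - b) := by
  set m := max (a + b - 1) 0 with hmdef
  set M := min a b with hMdef
  have hm : m ≤ Pkk := max_le (by linarith) hPkk
  have hM : Pkk ≤ M := le_min (by linarith) (by linarith)
  -- identities relating the other entries to m and M
  have i1 : max (a - b) 0 = a - M := by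
    rcases le_total a b with h | h
    · rw [hMdef, min_eq_left h, max_eq_right (by linarith : a - b ≤ 0)]; ring
    · rw [hMdef, min_eq_right h, max_eq_left (by linarith : (0:ℝ) ≤ a - b)]
  have i2 : min a (1 - b) = a - m := by
    rcases le_total (a + b) 1 with h | h
    · rw [hmdef, max_eq_right (by linarith : a + b - 1 ≤ 0),
        min_eq_left (by linarith : a ≤ 1 - b)]; ring
    · rw [hmdef, max_eq_left (by linarith : (0:ℝ) ≤ a + b - 1),
        min_eq_right (by linarith : 1 - b ≤ a)]; ring
  have i3 : max (b - a) 0 = b - M := by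
    rcases le_total a b with h | h
    · rw [hMdef, min_eq_left h, max_eq_left (by linarith : (0:ℝ) ≤ b - a)]
    · rw [hMdef, min_eq_right h, max_eq_right (by linarith : b - a ≤ 0)]; ring
  have i4 : min (1 - a) b = b - m := by
    rcases le_total (a + b) 1 with h | h
    · rw [hmdef, max_eq_right (by linarith : a + b - 1 ≤ 0),
        min_eq_right (by linarith : b ≤ 1 - a)]; ring
    · rw [hmdef, max_eq_left (by linarith : (0:ℝ) ≤ a + b - 1),
        min_eq_left (by linarith : 1 - a ≤ b)]; ring
  have i5 : min (1 - a) (1 - b) = 1 - a - b + M := by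
    rcases le_total a b with h | h
    · rw [hMdef, min_eq_left h, min_eq_right (by linarith : 1 - b ≤ 1 - a)]; ring
    · rw [hMdef, min_eq_right h, min_eq_left (by linarith : 1 - a ≤ 1 - b)]; ring
  have i6 : max (1 - a - b) 0 = 1 - a - b + m := by
    rcases le_total (a + b) 1 with h | h
    · rw [hmdef, max_eq_right (by linarith : a + b - 1 ≤ 0),
        max_eq_left (by linarith : (0:ℝ) ≤ 1 - a - b)]; ring
    · rw [hmdef, max_eq_left (by linarith : (0:ℝ) ≤ a + b - 1),
        max_eq_right (by linarith : 1 - a - b ≤ 0)]; ring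
  have key : ∀ r : ℝ, Pkk = r * m + (1 - r) * M →
      (Pkl = r * min a (1 - b) + (1 - r) * max (a - b) 0 ∧
       Plk = r * min (1 - a) b + (1 - r) * max (b - a) 0 ∧
       Pll = r * max (1 - a - b) 0 + (1 - r) * min (1 - a) (1 - b)) := by
    intro r hr
    refine ⟨?_, ?_, ?_⟩
    · rw [i1, i2]; linear_combination h1 - hr
    · rw [i3, i4]; linear_combination h3 - hr
    · rw [i5, i6]; linear_combination h4 - h1 + hr
  rcases eq_or_lt_of_le (hm.trans hM) with heq | hlt
  · have hPkkeq : Pkk = (0:ℝ) * m + (1 - 0) * M := by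
      rw [← heq] at hM ⊢
      have : Pkk = m := le_antisymm hM hm
      linarith
    obtain ⟨e1, e2, e3⟩ := key 0 hPkkeq
    exact ⟨0, le_refl 0, zero_le_one, hPkkeq, e1, e2, e3⟩
  · set r := (M - Pkk) / (M - m) with hrdef
    have hd : 0 < M - m := sub_pos.mpr hlt
    have hr0 : 0 ≤ r := div_nonneg (by linarith) hd.le
    have hr1 : r ≤ 1 := (div_le_one hd).mpr (by linarith)
    have hmul : r * (M - m) = M - Pkk := div_mul_cancel₀ _ hd.ne'
    have hPkkeq : Pkk = r * m + (1 - r) * M := by linear_combination hmul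
    obtain ⟨e1, e2, e3⟩ := key r hPkkeq
    exact ⟨r, hr0, hr1, hPkkeq, e1, e2, e3⟩
end

section
/- Let a, b ∈ [0,1] and let (P_kk, P_kl, P_lk, P_ll) be a consistent probability quadruple for (a, b). If min(a, 1 − b) ≠ max(a − b, 0), then min(1 − a, b) ≠ max(b − a, 0) and the interpolation parameter is phase-independent: (P_kl − max(a − b, 0)) / (min(a, 1 − b) − max(a − b, 0)) = (P_lk − max(b − a, 0)) / (min(1 − a, b) − max(b − a, 0)). -/
/-- The interpolation parameter is phase-independent. -/
theorem stmt_9 (a b Pkk Pkl Plk Pll : ℝ)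
    (ha0 : 0 ≤ a) (ha1 : a ≤ 1) (hb0 : 0 ≤ b) (hb1 : b ≤ 1)
    (hPkk : 0 ≤ Pkk) (hPkl : 0 ≤ Pkl) (hPlk : 0 ≤ Plk) (hPll : 0 ≤ Pll)
    (h1 : Pkk + Pkl = a) (h2 : Pll + Plk = 1 - a)
    (h3 : Pkk + Plk = b) (h4 : Pll + Pkl = 1 - b)
    (hne : min a (1 - b) ≠ max (a - b) 0) :
    min (1 - a) b ≠ max (b - a) 0 ∧
    (Pkl - max (a - b) 0) / (min a (1 - b) - max (a - b) 0) =
      (Plk - max (b - a) 0) / (min (1 - a) b - max (b - a) 0) := by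
  have hnum : Plk - max (b - a) 0 = Pkl - max (a - b) 0 := by
    simp only [max_def]
    split_ifs <;> linarith
  have hden : min (1 - a) b - max (b - a) 0 = min a (1 - b) - max (a - b) 0 := by
    simp only [min_def, max_def]
    split_ifs <;> linarith
  constructor
  · intro heq
    apply hne
    have : min (1 - a) b - max (b - a) 0 = 0 := by rw [heq]; ring
    rw [hden] at this
    linarith [sub_eq_zero.mp this]
  · rw [hnum, hden]
end

section
/- Let u_k, u_l, p_k, p_l be real numbers and Z_k, Z_l > 0, and define the interface speed σ(L,R) := (Z_L u_L + Z_R u_R)/(Z_L + Z_R) − (p_R − p_L)/(Z_L + Z_R) and interface pressure p*(L,R) := (Z_R p_L + Z_L p_R)/(Z_L + Z_R) − Z_L Z_R (u_R − u_L)/(Z_L + Z_R). Then the equilibrium conditions σ((u_k,p_k,Z_k),(u_l,p_l,Z_l)) = σ((u_l,p_l,Z_l),(u_k,p_k,Z_k)) and p*((u_k,p_k,Z_k),(u_l,p_l,Z_l)) = p*((u_l,p_l,Z_l),(u_k,p_k,Z_k)) hold simultaneously if and only if p_k = p_l and u_k = u_l. -/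
/-- Contact-discontinuity speed produced by an acoustic-type Riemann solver. -/
noncomputable def acousticSigma (uL pL ZL uR pR ZR : ℝ) : ℝ :=
  (ZL * uL + ZR * uR) / (ZL + ZR) - (pR - pL) / (ZL + ZR)

/-- Interfacial pressure produced by an acoustic-type Riemann solver. -/
noncomputable def acousticPstar (uL pL ZL uR pR ZR : ℝ) : ℝ :=
  (ZR * pL + ZL * pR) / (ZL + ZR) - ZL * ZR * (uR - uL) / (ZL + ZR)

/-- The equilibrium variety: equality of the two interface speeds and the two
interfacial pressures holds simultaneously iff `pk = pl` and `uk = ul`. -/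
theorem stmt_12 (uk ul pk pl Zk Zl : ℝ) (hZk : 0 < Zk) (hZl : 0 < Zl) :
    (acousticSigma uk pk Zk ul pl Zl = acousticSigma ul pl Zl uk pk Zk ∧
     acousticPstar uk pk Zk ul pl Zl = acousticPstar ul pl Zl uk pk Zk) ↔
    (pk = pl ∧ uk = ul) := by
  have h : Zk + Zl ≠ 0 := by positivity
  unfold acousticSigma acousticPstar
  constructor
  · rintro ⟨h1, h2⟩
    rw [div_sub_div_same, div_sub_div_same, div_eq_div_iff h (by positivity)] at h1 h2
    constructor <;> nlinarith [mul_pos hZk hZl, add_pos hZk hZl, mul_pos (mul_pos hZk hZl) (add_pos hZk hZl)]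
  · rintro ⟨rfl, rfl⟩
    constructor <;> ring_nf
end

section
/- Let u_k, u_l, p_k, p_l be real numbers, Z_k, Z_l > 0, and c ≥ 0. With σ_lk, σ_kl, p*_lk, p*_kl the interface speeds and pressures of the acoustic-type solver, the mean interfacial quantities p'_I := (Z_k p_l + Z_l p_k)/(Z_k + Z_l), u'_I := (Z_k u_k + Z_l u_l)/(Z_k + Z_l), and the coefficients μ := 2c/(Z_k + Z_l), λ := Z_k Z_l μ, the relaxation vector c·(σ_kl − σ_lk, 0, p*_lk − p*_kl, p*_lk σ_lk − p*_kl σ_kl) equals ( μ(p_k − p_l), 0, −λ(u_k − u_l), −μ(p_k − p_l) p'_I − λ(u_k − u_l) u'_I ). -/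
/-- The continuous limit of the DEM relaxation term takes the classical
pressure/velocity relaxation form. -/
theorem stmt_13 (uk ul pk pl Zk Zl c mu lam pI' uI' : ℝ)
    (hZk : 0 < Zk) (hZl : 0 < Zl) (hc : 0 ≤ c)
    (hpI : pI' = (Zk * pl + Zl * pk) / (Zk + Zl))
    (huI : uI' = (Zk * uk + Zl * ul) / (Zk + Zl))
    (hmu : mu = 2 * c / (Zk + Zl))
    (hlam : lam = Zk * Zl * mu) :
    (c * (acousticSigma uk pk Zk ul pl Zl - acousticSigma ul pl Zl uk pk Zk),
     (0 : ℝ),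
     c * (acousticPstar ul pl Zl uk pk Zk - acousticPstar uk pk Zk ul pl Zl),
     c * (acousticPstar ul pl Zl uk pk Zk * acousticSigma ul pl Zl uk pk Zk -
          acousticPstar uk pk Zk ul pl Zl * acousticSigma uk pk Zk ul pl Zl)) =
    (mu * (pk - pl),
     (0 : ℝ),
     -(lam * (uk - ul)),
     -(mu * (pk - pl) * pI') - lam * (uk - ul) * uI') := by
  have hZ : Zk + Zl ≠ 0 := by positivity
  have hZ' : Zl + Zk ≠ 0 := by linarith [hZ]; 
  subst hpI huI hmu hlam
  simp only [acousticSigma, acousticPstar, Prod.mk.injEq]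
  refine ⟨?_, trivial, ?_, ?_⟩ <;> field_simp <;> ring
end

section
/- Let α₁, α₂, ρ₁, ρ₂, a₁, a₂ be positive reals, set m₁ := α₁ρ₁, m₂ := α₂ρ₂ and d := α₁ρ₂a₂² + α₂ρ₁a₁². Let dM be the 8×6 matrix whose rows are e₁, e₂, e₃, e₄, e₅, e₆, e₃, e₄ (rows 1–6 the identity, row 7 equal to row 3, row 8 equal to row 4), let v₁ := (1, −ρ₁/α₁, 0, −ρ₁a₁²/α₁, −1, ρ₂/α₂, 0, ρ₂a₂²/α₂)ᵀ and v₂ := (0, 0, 1/(α₁ρ₁), 0, 0, 0, −1/(α₂ρ₂), 0)ᵀ, and let Π be the 6×8 matrix with rows: (1, 0, 0, α₁α₂/d, 0, 0, 0, −α₁α₂/d), (0, 1, 0, −α₂ρ₁/d, 0, 0, 0, α₂ρ₁/d), (0, 0, m₁/(m₁+m₂), 0, 0, 0, m₂/(m₁+m₂), 0), (0, 0, 0, α₁ρ₂a₂²/d, 0, 0, 0, α₂ρ₁a₁²/d), (0, 0, 0, −α₁α₂/d, 1, 0, 0, α₁α₂/d), (0, 0, 0, α₁ρ₂/d, 0,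 1, 0, −α₁ρ₂/d). Then Π·dM equals the 6×6 identity matrix and Π·v₁ = 0 and Π·v₂ = 0; consequently Π·S = [I₆ | 0 | 0] for the 8×8 matrix S := [dM | v₁ | v₂]. -/
open Matrix


private lemma cons_val_five' {α : Type*} {m : ℕ} (x : α) (u : Fin (m+5) → α) :
    Matrix.vecCons x u 5 = Matrix.vecHead (Matrix.vecTail (Matrix.vecTail (Matrix.vecTail (Matrix.vecTail u)))) :=
  rfl

private lemma cons_val_six' {α : Type*} {m : ℕ} (x : α) (u : Fin (m+6) → α) :
    Matrix.vecCons x u 6 = Matrix.vecHead (Matrix.vecTail (Matrix.vecTail (Matrix.vecTail (Matrix.vecTail (Matrix.vecTail u))))) :=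
  rfl

private lemma cons_val_seven' {α : Type*} {m : ℕ} (x : α) (u : Fin (m+7) → α) :
    Matrix.vecCons x u 7 = Matrix.vecHead (Matrix.vecTail (Matrix.vecTail (Matrix.vecTail (Matrix.vecTail (Matrix.vecTail (Matrix.vecTail u)))))) :=
  rfl

set_option maxHeartbeats 1000000 in
/-- The projection matrix `Π` of the projection-relaxation strategy is a left inverse
of the Jacobian `dM` of the Maxwellian and annihilates the vectors `v₁, v₂` spanning
the range of the linearized relaxation source term; consequently `Π·S = [I₆ | 0 | 0]`. -/
theorem stmt_14 (α₁ α₂ ρ₁ ρ₂ a₁ a₂ m₁ m₂ d : ℝ)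
    (hα₁ : 0 < α₁) (hα₂ : 0 < α₂) (hρ₁ : 0 < ρ₁) (hρ₂ : 0 < ρ₂)
    (ha₁ : 0 < a₁) (ha₂ : 0 < a₂)
    (hm₁ : m₁ = α₁ * ρ₁) (hm₂ : m₂ = α₂ * ρ₂)
    (hd : d = α₁ * ρ₂ * a₂ ^ 2 + α₂ * ρ₁ * a₁ ^ 2)
    (dM : Matrix (Fin 8) (Fin 6) ℝ) (v₁ v₂ : Fin 8 → ℝ)
    (Pi : Matrix (Fin 6) (Fin 8) ℝ) (S : Matrix (Fin 8) (Fin 8) ℝ)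
    (hdM : dM = !![1,0,0,0,0,0;
                   0,1,0,0,0,0;
                   0,0,1,0,0,0;
                   0,0,0,1,0,0;
                   0,0,0,0,1,0;
                   0,0,0,0,0,1;
                   0,0,1,0,0,0;
                   0,0,0,1,0,0])
    (hv₁ : v₁ = ![1, -ρ₁ / α₁, 0, -(ρ₁ * a₁ ^ 2) / α₁,
                  -1, ρ₂ / α₂, 0, ρ₂ * a₂ ^ 2 / α₂])
    (hv₂ : v₂ = ![0, 0, 1 / (α₁ * ρ₁), 0, 0, 0, -(1 / (α₂ * ρ₂)), 0])
    (hPi : Pi = !![1, 0, 0, α₁ * α₂ / d, 0, 0, 0, -(α₁ * α₂) / d;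
                   0, 1, 0, -(α₂ * ρ₁) / d, 0, 0, 0, α₂ * ρ₁ / d;
                   0, 0, m₁ / (m₁ + m₂), 0, 0, 0, m₂ / (m₁ + m₂), 0;
                   0, 0, 0, α₁ * ρ₂ * a₂ ^ 2 / d, 0, 0, 0, α₂ * ρ₁ * a₁ ^ 2 / d;
                   0, 0, 0, -(α₁ * α₂) / d, 1, 0, 0, α₁ * α₂ / d;
                   0, 0, 0, α₁ * ρ₂ / d, 0, 1, 0, -(α₁ * ρ₂) / d])
    (hS : S = Matrix.of fun (i : Fin 8) (j : Fin 8) =>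
            if h : (j : ℕ) < 6 then dM i ⟨(j : ℕ), h⟩
            else if (j : ℕ) = 6 then v₁ i else v₂ i) :
    Pi * dM = 1 ∧ Pi.mulVec v₁ = 0 ∧ Pi.mulVec v₂ = 0 ∧
    Pi * S = Matrix.of (fun (i : Fin 6) (j : Fin 8) =>
      if (j : ℕ) = (i : ℕ) then (1 : ℝ) else 0) := by
  have hd0 : d ≠ 0 := by subst hd; positivity
  have hm0 : m₁ + m₂ ≠ 0 := by subst hm₁ hm₂; positivity
  have hα₁' : α₁ ≠ 0 := hα₁.ne'
  have hα₂' : α₂ ≠ 0 := hα₂.ne'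
  have hρ₁' : ρ₁ ≠ 0 := hρ₁.ne'
  have hρ₂' : ρ₂ ≠ 0 := hρ₂.ne'
  have h1 : Pi * dM = 1 := by
    subst hm₁ hm₂ hd hdM hPi
    ext i j
    fin_cases i <;> fin_cases j <;>
      simp [Matrix.mul_apply, Fin.sum_univ_succ, Matrix.one_apply,
        cons_val_five', cons_val_six', cons_val_seven'] <;>
      (try field_simp) <;> (try ring)
  have h2 : Pi.mulVec v₁ = 0 := by
    subst hm₁ hm₂ hd hv₁ hPi
    ext i
    fin_cases i <;>
      simp [Matrix.mulVec, dotProduct, Fin.sum_univ_succ,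
        cons_val_five', cons_val_six', cons_val_seven'] <;>
      (try field_simp) <;> (try ring)
  have h3 : Pi.mulVec v₂ = 0 := by
    subst hm₁ hm₂ hd hv₂ hPi
    ext i
    fin_cases i <;>
      simp [Matrix.mulVec, dotProduct, Fin.sum_univ_succ,
        cons_val_five', cons_val_six', cons_val_seven'] <;>
      (try field_simp) <;> (try ring)
  refine ⟨h1, h2, h3, ?_⟩
  ext i j
  rw [Matrix.mul_apply, Matrix.of_apply]
  by_cases hj : (j : ℕ) < 6
  · simp only [hS, Matrix.of_apply, dif_pos hj]
    have hs : ∑ k, Pi i k * dM k ⟨(j : ℕ), hj⟩ = (Pi * dM) i ⟨(j : ℕ), hj⟩ :=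
      (Matrix.mul_apply).symm
    rw [hs, h1, Matrix.one_apply]
    simp [Fin.ext_iff, eq_comm]
  · have hi := i.isLt
    have hne : ¬ (j : ℕ) = (i : ℕ) := by omega
    rcases (by omega : (j : ℕ) = 6 ∨ (j : ℕ) = 7) with h6 | h7
    · simp only [hS, Matrix.of_apply, dif_neg hj, if_pos h6, if_neg hne]
      simpa [Matrix.mulVec, dotProduct] using congrFun h2 i
    · simp only [hS, Matrix.of_apply, dif_neg hj, if_neg (by omega : ¬ (j : ℕ) = 6),
        if_neg hne]
      simpa [Matrix.mulVec, dotProduct] using congrFun h3 i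
end
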